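/- Let B(λ) be a highest weight normal crystal with highest weight element b_λ. If b = f_{i_1}^{m_1} f_{i_2}^{m_2} ⋯ f_{i_k}^{m_k}(b_λ) with all m_j ≥ 0 and k minimal among all such expressions for b, then s_{i_1} s_{i_2} ⋯ s_{i_k} is a reduced expression in the Weyl group W. -/

import Mathlib

/-! Common definitions: abstract normal crystals, tensor products, extremal subsets,
hinges, Demazure crystals, and related Coxeter-theoretic notions. -/

/-- Iterate a partially defined map `k` times. -/
def optIter {B : Type*} (g : B → Option B) : ℕ → B → Option B
  | 0, b => some b
  | k + 1, b => (g b).bind (optIter g k)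

/-- The raw data of a crystal: index set `I` (Dynkin nodes), weight lattice `P` with
simple roots `alpha i` and coroot pairings `pair i = ⟨α_i^∨, ·⟩`, and the structure
maps `wt, ε_i, φ_i, e_i, f_i` (with `none` playing the role of `0`). -/
structure CrystalStruct (I : Type*) (P : Type*) [AddCommGroup P] (B : Type*) where
  alpha : I → P
  pair : I → P →+ ℤ
  wt : B → P
  eps : I → B → ℤ
  phi : I → B → ℤ
  e : I → B → Option B
  f : I → B → Option B

namespace CrystalStruct

variable {I P B B₁ B₂ : Type*} [AddCommGroup P]

/-- The crystal axioms (C1)–(C4) of a (finite, normal) crystal. Axiom (C4) is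
expressed by saying `ε_i(b)` (resp. `φ_i(b)`) is the largest `k` with `e_i^k(b)`
(resp. `f_i^k(b)`) defined. -/
structure IsCrystal (C : CrystalStruct I P B) : Prop where
  C1 : ∀ i b, C.phi i b - C.eps i b = C.pair i (C.wt b)
  wt_e : ∀ i b b', C.e i b = some b' → C.wt b' = C.wt b + C.alpha i
  wt_f : ∀ i b b', C.f i b = some b' → C.wt b' = C.wt b - C.alpha i
  C3 : ∀ i b b', C.e i b = some b' ↔ C.f i b' = some b
  eps_nonneg : ∀ i b, 0 ≤ C.eps i b
  phi_nonneg : ∀ i b, 0 ≤ C.phi i b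
  eps_max : ∀ i b, (optIter (C.e i) (C.eps i b).toNat b).isSome ∧
      ∀ k : ℕ, (optIter (C.e i) k b).isSome → (k : ℤ) ≤ C.eps i b
  phi_max : ∀ i b, (optIter (C.f i) (C.phi i b).toNat b).isSome ∧
      ∀ k : ℕ, (optIter (C.f i) k b).isSome → (k : ℤ) ≤ C.phi i b

/-- The tensor product `B₁ ⊗ B₂` of two crystals, with the standard signature rule. -/
def tensor (C₁ : CrystalStruct I P B₁) (C₂ : CrystalStruct I P B₂) :
    CrystalStruct I P (B₁ × B₂) where
  alpha := C₁.alpha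
  pair := C₁.pair
  wt b := C₁.wt b.1 + C₂.wt b.2
  eps i b := max (C₁.eps i b.1) (C₂.eps i b.2 - C₁.pair i (C₁.wt b.1))
  phi i b := max (C₂.phi i b.2) (C₁.phi i b.1 + C₁.pair i (C₂.wt b.2))
  e i b := if C₂.eps i b.2 ≤ C₁.phi i b.1
      then (C₁.e i b.1).map (fun x => (x, b.2))
      else (C₂.e i b.2).map (fun y => (b.1, y))
  f i b := if C₂.eps i b.2 < C₁.phi i b.1
      then (C₁.f i b.1).map (fun x => (x, b.2))
      else (C₂.f i b.2).map (fun y => (b.1, y))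

/-- A subset `X` of a crystal is *extremal* (string property): `X` is nonempty, closed
under all raising operators `e_i`, and whenever `x ∈ X` is not the top of its `i`-string
(i.e. `e_i x` is defined), `X` also contains `f_i x` when defined.  This is the local
reformulation of: every `i`-string meets `X` in `∅`, the whole string, or its top element. -/
def Extremal (C : CrystalStruct I P B) (X : Set B) : Prop :=
  X.Nonempty ∧ ∀ i, ∀ x ∈ X,
    (∀ x', C.e i x = some x' → x' ∈ X) ∧
    ((C.e i x).isSome → ∀ x', C.f i x = some x' → x' ∈ X)

/-- `x ⊗ y` is an *`i`-hinge*: `ε_i(x) > 0`, `φ_i(x) = 0`, `ε_i(y) = 0`, `φ_i(y) > 0`. -/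
def IsHinge (C₁ : CrystalStruct I P B₁) (C₂ : CrystalStruct I P B₂)
    (i : I) (x : B₁) (y : B₂) : Prop :=
  0 < C₁.eps i x ∧ C₁.phi i x = 0 ∧ C₂.eps i y = 0 ∧ 0 < C₂.phi i y

/-- `F_i X = ⋃_{k ≥ 0} f_i^k X` : close a subset under the lowering operator `f_i`. -/
def fClosure (C : CrystalStruct I P B) (i : I) (X : Set B) : Set B :=
  {b | ∃ x ∈ X, ∃ k, optIter (C.f i) k x = some b}

/-- `demWord C [i₁, …, i_k] X = F_{i₁} F_{i₂} ⋯ F_{i_k} X`. -/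
def demWord (C : CrystalStruct I P B) : List I → Set B → Set B
  | [], X => X
  | i :: L, X => C.fClosure i (C.demWord L X)

/-- Apply raising operators along a list of indices. -/
def applyE (C : CrystalStruct I P B) : List I → B → Option B
  | [], b => some b
  | i :: L, b => (C.e i b).bind (C.applyE L)

/-- `applyFPow C [(i₁,m₁),…,(i_k,m_k)] b = f_{i₁}^{m₁} f_{i₂}^{m₂} ⋯ f_{i_k}^{m_k} (b)`. -/
def applyFPow (C : CrystalStruct I P B) : List (I × ℕ) → B → Option B
  | [], b => some b
  | p :: L, b => (C.applyFPow L b).bind (optIter (C.f p.1) p.2)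

/-- A highest weight element: all raising operators vanish. -/
def HighestWeight (C : CrystalStruct I P B) (b : B) : Prop := ∀ i, C.e i b = none

/-- `C` is a highest weight normal crystal with highest weight element `hw`:
it satisfies the crystal axioms, `hw` is highest weight, and `B = F {hw}`. -/
structure IsHWCrystal (C : CrystalStruct I P B) (hw : B) : Prop where
  crystal : C.IsCrystal
  hw_top : C.HighestWeight hw
  connected : ∀ b, ∃ L : List I, b ∈ C.demWord L {hw}

/-- The connected component `F {b}` of `b` (closure under lowering operators). -/
def component (C : CrystalStruct I P B) (b : B) : Set B :=
  {x | ∃ L : List I, x ∈ C.demWord L {b}}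

end CrystalStruct

section Coxeter

open CrystalStruct

variable {I : Type*} {W : Type*} [Group W] {M : CoxeterMatrix I}

/-- Bruhat order via the subword property: `u ⪯ w` iff some reduced word for `w` contains
a reduced word for `u` as a subword. -/
def Bruhat (cs : CoxeterSystem M W) (u w : W) : Prop :=
  ∃ L L' : List I, cs.IsReduced L ∧ cs.wordProd L = w ∧
    L'.Sublist L ∧ cs.IsReduced L' ∧ cs.wordProd L' = u

variable {P B : Type*} [AddCommGroup P]

/-- The Demazure crystal `B_w = F_w {hw}`, as the union over reduced words for `w`
of the corresponding compositions of string closures. -/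
def DemCrystal (cs : CoxeterSystem M W) (C : CrystalStruct I P B) (hw : B) (w : W) :
    Set B :=
  {b | ∃ L : List I, cs.IsReduced L ∧ cs.wordProd L = w ∧ b ∈ C.demWord L {hw}}

/-- Kashiwara's theorem: `F_w {hw}` is independent of the reduced word for `w`. -/
def DemIndep (cs : CoxeterSystem M W) (C : CrystalStruct I P B) (hw : B) : Prop :=
  ∀ L L' : List I, cs.IsReduced L → cs.IsReduced L' → cs.wordProd L = cs.wordProd L' →
    C.demWord L {hw} = C.demWord L' {hw}

/-- A subset is a *direct sum of Demazure crystals* if it is the union, over a set of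
highest weight elements, of Demazure crystals of the corresponding components. -/
def IsDemazureSum (cs : CoxeterSystem M W) (C : CrystalStruct I P B) (Z : Set B) : Prop :=
  ∃ (S : Set B) (wf : B → W), (∀ b ∈ S, C.HighestWeight b) ∧
    Z = ⋃ b ∈ S, DemCrystal cs C b (wf b)

/-- `v` is the minimal-length representative of the coset `w H`. -/
def IsMinCosetRep (cs : CoxeterSystem M W) (H : Subgroup W) (w v : W) : Prop :=
  w⁻¹ * v ∈ H ∧ ∀ x : W, w⁻¹ * x ∈ H → cs.length v ≤ cs.length x

/-- `v` is the maximal-length representative of the coset `w H`. -/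
def IsMaxCosetRep (cs : CoxeterSystem M W) (H : Subgroup W) (w v : W) : Prop :=
  w⁻¹ * v ∈ H ∧ ∀ x : W, w⁻¹ * x ∈ H → cs.length x ≤ cs.length v

/-- The parabolic subgroup `W_σ = ⟨ s_i : s_i σ ≺ σ ⟩` generated by the left descents of `σ`. -/
def descentSubgroup (cs : CoxeterSystem M W) (σ : W) : Subgroup W :=
  Subgroup.closure {g | ∃ i, g = cs.simple i ∧ cs.length (cs.simple i * σ) < cs.length σ}

/-- The Weyl group acts on the weight lattice by simple reflections:
`s_i • p = p − ⟨α_i^∨, p⟩ α_i`. -/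
def ReflectionAction (cs : CoxeterSystem M W) (C : CrystalStruct I P B)
    [MulAction W P] : Prop :=
  ∀ (i : I) (p : P), cs.simple i • p = p - C.pair i p • C.alpha i

end Coxeter

namespace CrystalStruct

variable {I P B : Type*} [AddCommGroup P]

/-- Weight of a pure tensor `b₁ ⊗ ⋯ ⊗ b_m`, encoded as a list. -/
def listWt (C : CrystalStruct I P B) : List B → P
  | [] => 0
  | b :: l => C.wt b + C.listWt l

/-- `ε_i` on iterated tensors. -/
def listEps (C : CrystalStruct I P B) (i : I) : List B → ℤ
  | [] => 0
  | b :: l => max (C.eps i b) (C.listEps i l - C.pair i (C.wt b))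

/-- `φ_i` on iterated tensors. -/
def listPhi (C : CrystalStruct I P B) (i : I) : List B → ℤ
  | [] => 0
  | b :: l => max (C.listPhi i l) (C.phi i b + C.pair i (C.listWt l))

/-- `e_i` on iterated tensors (standard signature rule, iterated associatively). -/
def listE (C : CrystalStruct I P B) (i : I) : List B → Option (List B)
  | [] => none
  | b :: l => if C.listEps i l ≤ C.phi i b then (C.e i b).map (· :: l)
      else (C.listE i l).map (b :: ·)

/-- `f_i` on iterated tensors. -/
def listF (C : CrystalStruct I P B) (i : I) : List B → Option (List B)
  | [] => none
  | b :: l => if C.listEps i l < C.phi i b then (C.f i b).map (· :: l)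
      else (C.listF i l).map (b :: ·)

/-- The iterated tensor power crystal: pure tensors of all finite lengths, the
length-`m` ones forming `B^{⊗ m}`. -/
def tensorPow (C : CrystalStruct I P B) : CrystalStruct I P (List B) where
  alpha := C.alpha
  pair := C.pair
  wt := C.listWt
  eps := C.listEps
  phi := C.listPhi
  e := C.listE
  f := C.listF

end CrystalStruct


/-! Induct on `k`: the word `i₂ ⋯ i_k` is reduced, since dropping the first factor keeps
minimality. If `s_{i₁}` were a left descent of `w = s_{i₂} ⋯ s_{i_k}`, then `w` would have a
reduced word `i₁ :: T` with `|T| = k - 2`. By Kashiwara's independence of `F_w {b_λ}` from the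
reduced word, `f_{i₂}^{m₂} ⋯ f_{i_k}^{m_k}(b_λ) = f_{i₁}^n f_T(b_λ)` for some `n` and some
exponents along `T`, so `b = f_{i₁}^{m₁ + n} f_T(b_λ)` would have only `k - 1` factors. -/

namespace CoxeterSystem

variable {B W : Type*} [Group W] {M : CoxeterMatrix B} (cs : CoxeterSystem M W)

theorem isLeftDescent_of_not_isReduced_cons {ω : List B} (hω : cs.IsReduced ω) {i : B}
    (hiω : ¬cs.IsReduced (i :: ω)) : cs.IsLeftDescent (cs.wordProd ω) i := by
  by_contra hnot
  apply hiω
  rw [IsReduced, wordProd_cons, cs.not_isLeftDescent_iff.mp hnot, hω.eq, List.length_cons]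

theorem exists_isReduced_cons_of_isLeftDescent {w : W} {i : B} (hi : cs.IsLeftDescent w i) :
    ∃ ω : List B, cs.IsReduced (i :: ω) ∧ cs.wordProd (i :: ω) = w := by
  obtain ⟨ω, hω, hprod⟩ := cs.exists_isReduced (cs.simple i * w)
  have hw : cs.wordProd (i :: ω) = w := by
    rw [wordProd_cons, ← hprod, simple_mul_simple_cancel_left]
  refine ⟨ω, ?_, hw⟩
  rw [IsReduced, hw, List.length_cons, ← hω.eq, ← hprod, ← cs.isLeftDescent_iff.mp hi]

end CoxeterSystem

theorem optIter_add {B : Type*} (g : B → Option B) (k m : ℕ) (x : B) :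
    optIter g (k + m) x = (optIter g k x).bind (optIter g m) := by
  induction k generalizing x with
  | zero => simp [optIter]
  | succ n ih => simp [optIter, Nat.succ_add, ih, Option.bind_assoc]

namespace CrystalStruct

variable {I P B : Type*} [AddCommGroup P] (C : CrystalStruct I P B)

theorem applyFPow_cons_eq_some_iff (i : I) (m : ℕ) (ps : List (I × ℕ)) (x b : B) :
    C.applyFPow ((i, m) :: ps) x = some b ↔
      ∃ b', C.applyFPow ps x = some b' ∧ optIter (C.f i) m b' = some b :=
  Option.bind_eq_some_iff

theorem mem_demWord_singleton_iff (L : List I) (x b : B) :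
    b ∈ C.demWord L {x} ↔
      ∃ ps : List (I × ℕ), ps.map Prod.fst = L ∧ C.applyFPow ps x = some b := by
  induction L generalizing b with
  | nil =>
    simp only [demWord, Set.mem_singleton_iff, List.map_eq_nil_iff, exists_eq_left, applyFPow,
      Option.some_inj]
    exact eq_comm
  | cons i L ih =>
    constructor
    · rintro ⟨c, hc, k, hk⟩
      obtain ⟨ps, rfl, hps⟩ := (ih c).mp hc
      exact ⟨(i, k) :: ps, rfl, (C.applyFPow_cons_eq_some_iff i k ps x b).mpr ⟨c, hps, hk⟩⟩
    · rintro ⟨_ | ⟨⟨j, k⟩, ps⟩, hps, hb⟩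
      · simp at hps
      obtain ⟨rfl, rfl⟩ := List.cons_eq_cons.mp hps
      obtain ⟨c, hc, hk⟩ := (C.applyFPow_cons_eq_some_iff j k ps x b).mp hb
      exact ⟨c, (ih c).mpr ⟨ps, rfl, hc⟩, k, hk⟩

theorem exists_applyFPow_of_mem_demWord_cons {i : I} {T : List I} {x b' b : B} {m : ℕ}
    (hb' : b' ∈ C.demWord (i :: T) {x}) (hb : optIter (C.f i) m b' = some b) :
    ∃ ps : List (I × ℕ), ps.length = T.length + 1 ∧ C.applyFPow ps x = some b := by
  obtain ⟨c, hc, k, hk⟩ := hb'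
  obtain ⟨ps, rfl, hps⟩ := (C.mem_demWord_singleton_iff T x c).mp hc
  refine ⟨(i, k + m) :: ps, by simp, (C.applyFPow_cons_eq_some_iff ..).mpr ⟨c, hps, ?_⟩⟩
  rw [optIter_add, hk, Option.bind_some, hb]

variable {W : Type*} [Group W] {M : CoxeterMatrix I} {cs : CoxeterSystem M W} {C} {hw : B}

theorem exists_shorter_applyFPow (hind : DemIndep cs C hw) {i : I} {m : ℕ}
    {ps : List (I × ℕ)} {b : B} (hb : C.applyFPow ((i, m) :: ps) hw = some b)
    (hred : cs.IsReduced (ps.map Prod.fst)) (hnot : ¬cs.IsReduced (i :: ps.map Prod.fst)) :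
    ∃ ps' : List (I × ℕ), ps'.length = ps.length ∧ C.applyFPow ps' hw = some b := by
  obtain ⟨b', hb', hfb⟩ := (C.applyFPow_cons_eq_some_iff i m ps hw b).mp hb
  obtain ⟨T, hT, hprod⟩ := cs.exists_isReduced_cons_of_isLeftDescent
    (cs.isLeftDescent_of_not_isReduced_cons hred hnot)
  have hb'T : b' ∈ C.demWord (i :: T) {hw} := by
    rw [← hind _ _ hred hT hprod.symm]
    exact (C.mem_demWord_singleton_iff _ hw b').mpr ⟨ps, rfl, hb'⟩
  have hlen : T.length + 1 = ps.length := by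
    rw [← List.length_cons, ← hT.eq, hprod, hred.eq, List.length_map]
  obtain ⟨ps', hps', hps'b⟩ := C.exists_applyFPow_of_mem_demWord_cons hb'T hfb
  exact ⟨ps', hps'.trans hlen, hps'b⟩

end CrystalStruct

open CrystalStruct in
theorem stmt10_general {I P B : Type*} [AddCommGroup P] {W : Type*} [Group W]
    {M : CoxeterMatrix I} (cs : CoxeterSystem M W)
    (C : CrystalStruct I P B) (hw : B)
    (hind : DemIndep cs C hw)
    (b : B) (ps : List (I × ℕ)) (hb : C.applyFPow ps hw = some b)
    (hmin : ∀ ps' : List (I × ℕ), C.applyFPow ps' hw = some b →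
      ps.length ≤ ps'.length) :
    cs.IsReduced (ps.map Prod.fst) := by
  induction ps generalizing b with
  | nil => simp [CoxeterSystem.IsReduced]
  | cons p ps ih =>
    obtain ⟨i, m⟩ := p
    obtain ⟨b', hb', hfb⟩ := (C.applyFPow_cons_eq_some_iff i m ps hw b).mp hb
    have hred : cs.IsReduced (ps.map Prod.fst) := ih b' hb' fun ps' hps' => by
      simpa using hmin ((i, m) :: ps') ((C.applyFPow_cons_eq_some_iff ..).mpr ⟨b', hps', hfb⟩)
    by_contra hnot
    obtain ⟨ps', hlen, hps'⟩ := exists_shorter_applyFPow hind hb hred hnot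
    exact Nat.not_succ_le_self _ (hlen ▸ hmin ps' hps')

open CrystalStruct in
/-- Proposition: subword: if `b = f_{i₁}^{m₁} ⋯ f_{i_k}^{m_k}(b_λ)` with
`k` minimal among all such expressions, then `s_{i₁} ⋯ s_{i_k}` is reduced. -/
theorem stmt10 {I P B : Type*} [AddCommGroup P] {W : Type*} [Group W]
    {M : CoxeterMatrix I} (cs : CoxeterSystem M W)
    (C : CrystalStruct I P B) (hw : B) (hC : C.IsHWCrystal hw)
    (hind : DemIndep cs C hw)
    (b : B) (ps : List (I × ℕ)) (hb : C.applyFPow ps hw = some b)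
    (hmin : ∀ ps' : List (I × ℕ), C.applyFPow ps' hw = some b →
      ps.length ≤ ps'.length) :
    cs.IsReduced (ps.map Prod.fst) :=
  stmt10_general cs C hw hind b ps hb hmin
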